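/- arXiv:1710.07836 — 3 statements merged into one kernel-verified Lean document; each statement's English description precedes it below -/
import Mathlib

section
/- Let T be a subdivision of a rooted tree with vertex set V. Then for any nonempty subset U of V, there exists a set of pairwise vertex-disjoint directed paths in T, each of which ends at a leaf of T, such that each vertex in U lies on exactly one of the paths. -/
open Relation

/-- Out-degree of a vertex in a digraph given by its arc relation. -/
noncomputable def outDeg {V : Type*} (A : V → V → Prop) (v : V) : ℕ := {u | A v u}.ncard
/-- In-degree of a vertex in a digraph given by its arc relation. -/
noncomputable def inDeg {V : Type*} (A : V → V → Prop) (v : V) : ℕ := {u | A u v}.ncard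

/-- A rooted phylogenetic network on leaf set `X`. -/
structure PhyloNet (V : Type*) [Fintype V] [DecidableEq V] where
  Arc : V → V → Prop
  root : V
  X : Finset V
  acyclic : ∀ v, ¬ Relation.TransGen Arc v v
  reach : ∀ v, Relation.ReflTransGen Arc root v
  root_out : 1 ≤ outDeg Arc root
  leaf_iff : ∀ v, v ∈ X ↔ outDeg Arc v = 0
  leaf_in : ∀ v ∈ X, inDeg Arc v = 1
  internal : ∀ v, v ≠ root → v ∉ X →
    (inDeg Arc v = 1 ∧ 2 ≤ outDeg Arc v) ∨ (2 ≤ inDeg Arc v ∧ outDeg Arc v = 1)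

section Defs
variable {V : Type*} [Fintype V] [DecidableEq V]

/-- A reticulation: in-degree at least two. -/
def IsRetic (N : PhyloNet V) (v : V) : Prop := 2 ≤ inDeg N.Arc v
/-- A tree vertex: a non-leaf vertex of in-degree at most one. -/
def IsTreeVert (N : PhyloNet V) (v : V) : Prop := v ∉ N.X ∧ inDeg N.Arc v ≤ 1
/-- An omnian: a non-leaf vertex all of whose children are reticulations. -/
def IsOmnian (N : PhyloNet V) (v : V) : Prop := v ∉ N.X ∧ ∀ u, N.Arc v u → IsRetic N u
/-- A binary network: all in- and out-degrees are at most two. -/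
def IsBinary (N : PhyloNet V) : Prop := ∀ v : V, inDeg N.Arc v ≤ 2 ∧ outDeg N.Arc v ≤ 2

/-- A rooted spanning tree of `N` with the same root as `N`. -/
def IsRSTree (N : PhyloNet V) (T : V → V → Prop) : Prop :=
  (∀ u v, T u v → N.Arc u v) ∧ (∀ v, inDeg T v = 0 ↔ v = N.root) ∧
  (∀ v, v ≠ N.root → inDeg T v = 1)

/-- A support tree: a rooted spanning tree with the same root, all of whose leaves are in `X`. -/
def IsSupportTree (N : PhyloNet V) (T : V → V → Prop) : Prop :=
  IsRSTree N T ∧ ∀ v, outDeg T v = 0 → v ∈ N.X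

/-- Tree-based network. -/
def TreeBased (N : PhyloNet V) : Prop := ∃ T, IsSupportTree N T

/-- A (nonempty, repetition-free) directed path recorded as a list of vertices. -/
def IsPathIn (A : V → V → Prop) (p : List V) : Prop := p ≠ [] ∧ p.Chain' A ∧ p.Nodup
/-- The path ends at a vertex of `X`. -/
def EndsIn (X : Finset V) (p : List V) : Prop := ∃ x ∈ X, p.getLast? = some x
/-- Pairwise vertex-disjoint family of paths. -/
def PairwiseDisj (P : Finset (List V)) : Prop :=
  ∀ p ∈ P, ∀ q ∈ P, p ≠ q → ∀ v : V, v ∈ p → v ∉ q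
/-- A partition of the vertex set of `N` into vertex-disjoint directed paths
ending at leaves in `X`. -/
def IsPathPartition (N : PhyloNet V) (P : Finset (List V)) : Prop :=
  (∀ p ∈ P, IsPathIn N.Arc p ∧ EndsIn N.X p) ∧ PairwiseDisj P ∧ ∀ v : V, ∃ p ∈ P, v ∈ p

/-- A matching in the bipartite graph with edge set `E` (edges from a first copy of `V`
to a second copy of `V`), recorded as a set of edges no two of which share an endpoint. -/
def IsMatchingOn (E : V → V → Prop) (M : Finset (V × V)) : Prop :=
  (∀ e ∈ M, E e.1 e.2) ∧ ∀ e ∈ M, ∀ f ∈ M, (e.1 = f.1 ∨ e.2 = f.2) → e = f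

/-- Size of a maximum matching of the bipartite graph with edge set `E`. -/
noncomputable def maxMatching (E : V → V → Prop) : ℕ :=
  sSup {n | ∃ M : Finset (V × V), IsMatchingOn E M ∧ M.card = n}

/-- An antichain of vertices of `N`. -/
def AntichainIn (N : PhyloNet V) (S : Finset V) : Prop :=
  ∀ u ∈ S, ∀ v ∈ S, u ≠ v → ¬ Relation.TransGen N.Arc u v

/-- The antichain-to-leaf property: from every antichain there are pairwise
vertex-disjoint directed paths to leaves, one starting at each antichain element. -/
def AntichainToLeaf (N : PhyloNet V) : Prop :=
  ∀ S : Finset V, AntichainIn N S →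
    ∃ f : V → List V,
      (∀ s ∈ S, IsPathIn N.Arc (f s) ∧ (f s).head? = some s ∧ EndsIn N.X (f s)) ∧
      ∀ s ∈ S, ∀ t ∈ S, s ≠ t → ∀ v : V, v ∈ f s → v ∉ f t

/-- A temporal network: a real labelling strictly increasing along tree arcs and
constant along reticulation arcs. -/
def Temporal (N : PhyloNet V) : Prop :=
  ∃ l : V → ℝ, ∀ u v, N.Arc u v →
    (IsRetic N v → l u = l v) ∧ (¬ IsRetic N v → l u < l v)

/-- `N'` is a binary refinement of `N`, witnessed by the contraction map `φ`:
`N` is obtained from the binary network `N'` by contracting the arcs whose endpoints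
are identified by `φ`. -/
def IsBinRefinement {V' : Type*} [Fintype V'] [DecidableEq V']
    (N' : PhyloNet V') (N : PhyloNet V) (φ : V' → V) : Prop :=
  IsBinary N' ∧ Function.Surjective φ ∧ φ N'.root = N.root ∧
  N'.X.image φ = N.X ∧ Set.InjOn φ ↑N'.X ∧
  (∀ u v : V, N.Arc u v ↔ ∃ u' v', φ u' = u ∧ φ v' = v ∧ N'.Arc u' v' ∧ φ u' ≠ φ v') ∧
  (∀ a b : V', φ a = φ b →
    Relation.ReflTransGen (fun x y => (N'.Arc x y ∨ N'.Arc y x) ∧ φ x = φ y) a b)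

/-- Edge of the bipartite graph `B_N` between omnians and reticulations. -/
def BEdge (N : PhyloNet V) (o r : V) : Prop := IsOmnian N o ∧ IsRetic N r ∧ N.Arc o r
/-- Edge of the bipartite graph `Z_N` between tree vertices with a reticulation child
and reticulations. -/
def ZEdge (N : PhyloNet V) (t r : V) : Prop :=
  IsTreeVert N t ∧ (∃ r', N.Arc t r' ∧ IsRetic N r') ∧ IsRetic N r ∧ N.Arc t r

/-- `R_t`: reticulations with no reticulation parent. -/
def Rt (N : PhyloNet V) (v : V) : Prop := IsRetic N v ∧ ∀ u, N.Arc u v → ¬ IsRetic N u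
/-- `Q_t`: vertices with a child in `R_t`. -/
def Qt (N : PhyloNet V) (v : V) : Prop := ∃ r, N.Arc v r ∧ Rt N r
/-- Edge of the bipartite graph `J_N`. -/
def JEdge (N : PhyloNet V) (q r : V) : Prop := Qt N q ∧ Rt N r ∧ N.Arc q r

/-- A supporting set for `J_N`. -/
def IsSupportingSet (N : PhyloNet V) (E : Finset (V × V)) : Prop :=
  (∀ e ∈ E, JEdge N e.1 e.2) ∧
  (∀ q, Qt N q → IsOmnian N q → ∃ e ∈ E, e.1 = q) ∧
  (∀ r, Rt N r → ∃! e : V × V, e ∈ E ∧ e.2 = r)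

/-- An arboreal arc: `u` is a reticulation, or `v` is a tree vertex or a leaf. -/
def ArborealArc (N : PhyloNet V) (u v : V) : Prop :=
  N.Arc u v ∧ (IsRetic N u ∨ ¬ IsRetic N v)

/-- The number of support trees of `N`, identified with their arc sets. -/
noncomputable def supCount (N : PhyloNet V) : ℕ :=
  {A' : Finset (V × V) | IsSupportTree N (fun u v => (u, v) ∈ A')}.ncard

/-- The bipartite graph `J_N`, as a simple graph on `Q_t ∪ R_t`. -/
def Jgraph (N : PhyloNet V) : SimpleGraph {v : V // Qt N v ∨ Rt N v} where
  Adj a b := JEdge N a.1 b.1 ∨ JEdge N b.1 a.1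
  symm := ⟨by intro a b h; tauto⟩
  loopless := by
    exact ⟨by rintro a (⟨_, _, h⟩ | ⟨_, _, h⟩) <;> exact N.acyclic _ (Relation.TransGen.single h)⟩

/-- Degree in `J_N`. -/
noncomputable def Jdeg (N : PhyloNet V) (a : {v : V // Qt N v ∨ Rt N v}) : ℕ :=
  ((Jgraph N).neighborSet a).ncard

end Defs

/-- A rooted tree (equivalently, a subdivision of a rooted tree): a rooted digraph
in which every non-root vertex has in-degree one and everything is reachable
from the root. -/
structure RootedDirTree (V : Type*) [Fintype V] [DecidableEq V] where
  Arc : V → V → Prop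
  root : V
  acyclic : ∀ v, ¬ Relation.TransGen Arc v v
  reach : ∀ v, Relation.ReflTransGen Arc root v
  root_in : inDeg Arc root = 0
  in_one : ∀ v, v ≠ root → inDeg Arc v = 1

/-!
Add the vertices of `U` one at a time, in order of decreasing number of descendants. If the new
vertex `u` is not yet covered, run a fresh path from `u` down to a leaf. It misses the earlier
paths: each of them starts at a vertex `s` that is not strictly below `u`, so if it met a
descendant of `u` then, ancestors in a tree being totally ordered, `s` would be an ancestor of
`u`, and the path, which follows the unique route down from `s`, would already pass through `u`.
-/

namespace List

variable {α : Type*} {r : α → α → Prop}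

theorem IsChain.pairwise_transGen {l : List α} (h : l.IsChain r) :
    l.Pairwise (TransGen r) :=
  (h.imp fun _ _ => TransGen.single).pairwise

theorem IsChain.nodup_of_acyclic {l : List α} (h : l.IsChain r) (hr : ∀ a, ¬ TransGen r a a) :
    l.Nodup :=
  h.pairwise_transGen.imp fun {a b} (hab : TransGen r a b) (hab' : a = b) => hr b (hab' ▸ hab)

theorem IsChain.reflTransGen_of_mem {l : List α} {a b : α} (h : l.IsChain r)
    (ha : l.head? = some a) (hb : b ∈ l) : ReflTransGen r a b := by
  obtain ⟨t, rfl⟩ : ∃ t, l = a :: t := by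
    cases l <;> simp_all
  rcases mem_cons.1 hb with rfl | hbt
  · exact .refl
  · exact (pairwise_cons.1 h.pairwise_transGen).1 b hbt |>.to_reflTransGen

theorem IsChain.exists_rel_of_mem {l : List α} {a b : α} (h : l.IsChain r)
    (ha : l.head? = some a) (hb : b ∈ l) (hba : b ≠ a) : ∃ c ∈ l, r c b := by
  induction l generalizing a with
  | nil => simp at hb
  | cons x t ih =>
    obtain rfl : x = a := by simpa using ha
    have hbt : b ∈ t := (mem_cons.1 hb).resolve_left hba
    obtain ⟨y, t', rfl⟩ := exists_cons_of_ne_nil (ne_nil_of_mem hbt)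
    have hxy : r x y := (isChain_cons_cons.1 h).1
    by_cases hby : b = y
    · exact ⟨x, mem_cons_self, hby ▸ hxy⟩
    · obtain ⟨c, hc, hcb⟩ := ih (isChain_cons_cons.1 h).2 rfl hbt hby
      exact ⟨c, mem_cons_of_mem _ hc, hcb⟩

end List

section Digraph

variable {V : Type*}

def IsLeafPath (A : V → V → Prop) (p : List V) : Prop :=
  IsPathIn A p ∧ ∃ x, p.getLast? = some x ∧ outDeg A x = 0

noncomputable def descCount (A : V → V → Prop) (v : V) : ℕ := {w | TransGen A v w}.ncard

variable {A : V → V → Prop}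

theorem descCount_lt_of_transGen [Finite V] (hA : ∀ v, ¬ TransGen A v v) {u v : V}
    (h : TransGen A u v) :
    descCount A v < descCount A u :=
  Set.ncard_lt_ncard ⟨fun _ hw => h.trans hw, fun hsub => hA v (hsub h)⟩

theorem exists_isLeafPath_head?_eq [Finite V] (hA : ∀ v, ¬ TransGen A v v) (u : V) :
    ∃ p, IsLeafPath A p ∧ p.head? = some u := by
  by_cases hu : outDeg A u = 0
  · exact ⟨[u], ⟨⟨by simp, .singleton u, by simp⟩, u, rfl, hu⟩, rfl⟩
  · obtain ⟨c, hc⟩ := Set.nonempty_of_ncard_ne_zero hu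
    obtain ⟨p, ⟨⟨-, hch, -⟩, x, hx, hx0⟩, hhead⟩ := exists_isLeafPath_head?_eq hA c
    obtain ⟨t, rfl⟩ : ∃ t, p = c :: t := by
      cases p <;> simp_all
    have hchain : (u :: c :: t).IsChain A := hch.cons_cons hc
    refine ⟨u :: c :: t, ⟨⟨by simp, hchain, hchain.nodup_of_acyclic hA⟩, x, ?_, hx0⟩, rfl⟩
    rwa [List.getLast?_cons_cons]
termination_by descCount A u
decreasing_by exact descCount_lt_of_transGen hA (.single hc)

theorem PairwiseDisj.insert [DecidableEq V] {P : Finset (List V)} {p : List V}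
    (hP : PairwiseDisj P) (hp : ∀ q ∈ P, ∀ v ∈ p, v ∉ q) : PairwiseDisj (insert p P) := by
  intro q hq r hr hqr v hvq hvr
  rcases Finset.mem_insert.1 hq with rfl | hqP <;> rcases Finset.mem_insert.1 hr with rfl | hrP
  · exact hqr rfl
  · exact hp r hrP v hvq hvr
  · exact hp q hqP v hvr hvq
  · exact hP q hqP r hrP hqr v hvq hvr

theorem PairwiseDisj.existsUnique {P : Finset (List V)} {v : V} (hP : PairwiseDisj P)
    (hv : ∃ p ∈ P, v ∈ p) : ∃! p, p ∈ P ∧ v ∈ p := by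
  obtain ⟨p, hp, hvp⟩ := hv
  refine ⟨p, ⟨hp, hvp⟩, fun q ⟨hq, hvq⟩ => ?_⟩
  by_contra hqp
  exact hP q hq p hp hqp v hvq hvp

end Digraph

namespace RootedDirTree

variable {V : Type*} [Fintype V] [DecidableEq V] (T : RootedDirTree V)

theorem inDeg_le_one (v : V) : inDeg T.Arc v ≤ 1 := by
  by_cases hv : v = T.root
  · have := T.root_in
    subst hv
    omega
  · exact (T.in_one v hv).le

theorem leftUnique_arc : Relator.LeftUnique T.Arc := fun p q v hp hq =>
  (Set.ncard_le_one).1 (T.inDeg_le_one v) p hp q hq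

theorem reflTransGen_total {a b w : V} (ha : ReflTransGen T.Arc a w)
    (hb : ReflTransGen T.Arc b w) : ReflTransGen T.Arc a b ∨ ReflTransGen T.Arc b a := by
  have hUnique : Relator.RightUnique (Function.swap T.Arc) := fun _ _ _ h1 h2 =>
    T.leftUnique_arc h1 h2
  simpa only [reflTransGen_swap, or_comm] using
    ReflTransGen.total_of_right_unique hUnique (reflTransGen_swap.2 ha) (reflTransGen_swap.2 hb)

variable {T}

theorem mem_of_reflTransGen_of_mem {p : List V} {s u w : V} (hp : p.IsChain T.Arc)
    (hs : p.head? = some s) (hsu : ReflTransGen T.Arc s u) (huw : ReflTransGen T.Arc u w)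
    (hw : w ∈ p) : u ∈ p := by
  induction huw with
  | refl => exact hw
  | @tail c w huc hcw ih =>
    have hws : w ≠ s := by
      rintro rfl
      exact T.acyclic w (TransGen.tail' (hsu.trans huc) hcw)
    obtain ⟨c', hc', hc'w⟩ := hp.exists_rel_of_mem hs hw hws
    exact ih (T.leftUnique_arc hc'w hcw ▸ hc')

theorem transGen_head_of_not_mem {q : List V} {s u v : V} (hq : q.IsChain T.Arc)
    (hs : q.head? = some s) (hv : v ∈ q) (huv : ReflTransGen T.Arc u v) (hu : u ∉ q) :
    TransGen T.Arc u s := by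
  rcases T.reflTransGen_total (hq.reflTransGen_of_mem hs hv) huv with hsu | hus
  · exact absurd (mem_of_reflTransGen_of_mem hq hs hsu huv hv) hu
  · refine (reflTransGen_iff_eq_or_transGen.1 hus).resolve_left ?_
    rintro rfl
    exact hu (List.mem_of_mem_head? hs)

theorem exists_pairwiseDisj_isLeafPath (U : Finset V) :
    ∃ P : Finset (List V), (∀ p ∈ P, IsLeafPath T.Arc p ∧ ∃ s ∈ U, p.head? = some s) ∧
      PairwiseDisj P ∧ ∀ u ∈ U, ∃ p ∈ P, u ∈ p := by
  induction U using Finset.induction_on_min_value (descCount T.Arc) with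
  | empty => exact ⟨∅, by simp, by simp [PairwiseDisj], by simp⟩
  | insert u U _ hmin ih =>
    obtain ⟨P, hP, hdisj, hcov⟩ := ih
    have hheads : ∀ p ∈ P, ∃ s ∈ insert u U, p.head? = some s := fun p hp =>
      let ⟨s, hs, hps⟩ := (hP p hp).2
      ⟨s, Finset.mem_insert_of_mem hs, hps⟩
    by_cases hu : ∃ p ∈ P, u ∈ p
    · refine ⟨P, fun p hp => ⟨(hP p hp).1, hheads p hp⟩, hdisj, ?_⟩
      simpa only [Finset.forall_mem_insert] using ⟨hu, hcov⟩
    push Not at hu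
    obtain ⟨d, hd, hdu⟩ := exists_isLeafPath_head?_eq T.acyclic u
    have hd_chain : d.IsChain T.Arc := hd.1.2.1
    -- No path of `P` starts strictly below `u`, since `u` minimises `descCount` on `insert u U`.
    have hd_disj : ∀ q ∈ P, ∀ v ∈ d, v ∉ q := by
      intro q hq v hvd hvq
      obtain ⟨⟨⟨-, hq_chain, -⟩, -⟩, s, hs, hqs⟩ := hP q hq
      have hus := transGen_head_of_not_mem hq_chain hqs hvq (hd_chain.reflTransGen_of_mem hdu hvd)
        (hu q hq)
      exact (hmin s hs).not_gt (descCount_lt_of_transGen T.acyclic hus)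
    refine ⟨insert d P, ?_, hdisj.insert hd_disj, ?_⟩
    · simp only [Finset.forall_mem_insert]
      exact ⟨⟨hd, u, Finset.mem_insert_self u U, hdu⟩, fun p hp => ⟨(hP p hp).1, hheads p hp⟩⟩
    · simp only [Finset.forall_mem_insert]
      refine ⟨⟨d, Finset.mem_insert_self d P, List.mem_of_mem_head? hdu⟩, fun v hv => ?_⟩
      obtain ⟨p, hp, hvp⟩ := hcov v hv
      exact ⟨p, Finset.mem_insert_of_mem hp, hvp⟩

end RootedDirTree

theorem stmt0_general {V : Type*} [Fintype V] [DecidableEq V]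
    (T : RootedDirTree V) (U : Finset V) :
    ∃ P : Finset (List V),
      (∀ p ∈ P, IsPathIn T.Arc p ∧ ∃ x, p.getLast? = some x ∧ outDeg T.Arc x = 0) ∧
      PairwiseDisj P ∧
      ∀ u ∈ U, ∃! p : List V, p ∈ P ∧ u ∈ p := by
  obtain ⟨P, hP, hdisj, hcov⟩ := T.exists_pairwiseDisj_isLeafPath U
  exact ⟨P, fun p hp => (hP p hp).1, hdisj, fun u hu => hdisj.existsUnique (hcov u hu)⟩

/-- In a subdivision of a rooted tree, for any nonempty vertex subset `U`
there are pairwise vertex-disjoint directed paths, each ending at a leaf,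
such that each vertex of `U` lies on exactly one path. -/
theorem stmt0 {V : Type*} [Fintype V] [DecidableEq V]
    (T : RootedDirTree V) (U : Finset V) (hU : U.Nonempty) :
    ∃ P : Finset (List V),
      (∀ p ∈ P, IsPathIn T.Arc p ∧ ∃ x, p.getLast? = some x ∧ outDeg T.Arc x = 0) ∧
      PairwiseDisj P ∧
      ∀ u ∈ U, ∃! p : List V, p ∈ P ∧ u ∈ p :=
  stmt0_general T U
end

section
/- Let N be a rooted phylogenetic network on X. If N is tree-based, then N satisfies the antichain-to-leaf property: for every antichain of k vertices of N there exist k pairwise vertex-disjoint directed paths from the elements of the antichain to leaves of N. -/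
open Relation

/-! Fix a support tree `T` of `N`. Following `T`-arcs from any vertex ends at a vertex with no
`T`-children, which lies in `X`; this gives each antichain element a path to a leaf. Since every
vertex has at most one `T`-parent, two vertices from which a common vertex is `T`-reachable are
`T`-comparable, so two of these paths can only meet if one antichain element lies below another. -/

namespace Relation

variable {α : Type*} {r : α → α → Prop}

theorem wellFounded_swap_of_acyclic [Finite α] (hr : ∀ a, ¬ TransGen r a a) :
    WellFounded (Function.swap r) :=
  haveI : Std.Irrefl (TransGen (Function.swap r)) :=
    ⟨fun a ha => hr a (transGen_swap.mp ha)⟩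
  (Finite.wellFounded_of_trans_of_irrefl _).mono fun _ _ => TransGen.single

theorem exists_isChain_to_maximal [Finite α] (hr : ∀ a, ¬ TransGen r a a) (a : α) :
    ∃ l : List α, l.head? = some a ∧ l.IsChain r ∧ l.Nodup ∧ (∀ b ∈ l, ReflTransGen r a b) ∧
      ∃ m, l.getLast? = some m ∧ ∀ b, ¬ r m b := by
  induction a using (wellFounded_swap_of_acyclic hr).induction with
  | _ a ih =>
    by_cases hmax : ∀ b, ¬ r a b
    · exact ⟨[a], rfl, List.isChain_singleton a, List.nodup_singleton a,
        fun b hb => List.mem_singleton.mp hb ▸ ReflTransGen.refl, a, rfl, hmax⟩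
    obtain ⟨b, hab⟩ := not_forall_not.mp hmax
    obtain ⟨l, hhead, hchain, hnodup, hreach, m, hlast, hm⟩ := ih b hab
    obtain ⟨l, rfl⟩ : ∃ l', l = b :: l' := List.head?_eq_some_iff.mp hhead
    refine ⟨a :: b :: l, rfl, List.isChain_cons_cons.mpr ⟨hab, hchain⟩, ?_, ?_, m, ?_, hm⟩
    · exact List.nodup_cons.mpr ⟨fun ha => hr a (TransGen.head' hab (hreach a ha)), hnodup⟩
    · rintro c (_ | ⟨_, hc⟩)
      · exact ReflTransGen.refl
      · exact ReflTransGen.head hab (hreach c hc)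
    · rwa [List.getLast?_cons_cons]

theorem ReflTransGen.total_of_left_unique (U : Relator.LeftUnique r) {a b c : α}
    (ac : ReflTransGen r a c) (bc : ReflTransGen r b c) :
    ReflTransGen r a b ∨ ReflTransGen r b a := by
  have U' : Relator.RightUnique (Function.swap r) := fun _ _ _ hb hc => U hb hc
  rcases (reflTransGen_swap.mpr ac).total_of_right_unique U' (reflTransGen_swap.mpr bc) with
    h | h
  · exact Or.inr (reflTransGen_swap.mp h)
  · exact Or.inl (reflTransGen_swap.mp h)

end Relation

section SupportTree

variable {V : Type*} [Fintype V] [DecidableEq V] {N : PhyloNet V} {T : V → V → Prop}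

theorem IsRSTree.acyclic (hT : IsRSTree N T) (v : V) : ¬ TransGen T v v :=
  fun hv => N.acyclic v (TransGen.mono hT.1 _ _ hv)

theorem IsRSTree.leftUnique (hT : IsRSTree N T) : Relator.LeftUnique T := by
  intro u w v huv hwv
  have hv : inDeg T v ≤ 1 := by
    rcases eq_or_ne v N.root with hroot | hroot
    · rw [(hT.2.1 v).mpr hroot]; exact zero_le_one
    · exact (hT.2.2 v hroot).le
  exact (Set.ncard_le_one (Set.toFinite _)).mp hv u huv w hwv

theorem IsSupportTree.mem_X_of_forall_not (hT : IsSupportTree N T) {v : V}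
    (hv : ∀ w, ¬ T v w) : v ∈ N.X :=
  hT.2 v <| (Set.ncard_eq_zero (Set.toFinite _)).mpr <| Set.eq_empty_of_forall_notMem hv

theorem AntichainIn.eq_of_reflTransGen {S : Finset V} (hS : AntichainIn N S)
    (hTN : ∀ u v, T u v → N.Arc u v) (hT : Relator.LeftUnique T) {s t v : V} (hs : s ∈ S)
    (ht : t ∈ S) (hsv : ReflTransGen T s v) (htv : ReflTransGen T t v) : s = t := by
  by_contra hst
  rcases hsv.total_of_left_unique hT htv with h | h
  · exact hS s hs t ht hst <| TransGen.mono hTN _ _ <|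
      (reflTransGen_iff_eq_or_transGen.mp h).resolve_left (Ne.symm hst)
  · exact hS t ht s hs (Ne.symm hst) <| TransGen.mono hTN _ _ <|
      (reflTransGen_iff_eq_or_transGen.mp h).resolve_left hst

end SupportTree

/-- tree-based networks satisfy the antichain-to-leaf property. -/
theorem stmt6 {V : Type*} [Fintype V] [DecidableEq V] (N : PhyloNet V)
    (h : TreeBased N) : AntichainToLeaf N := by
  obtain ⟨T, hT⟩ := h
  intro S hS
  choose f hhead hchain hnodup hreach hlast using
    fun s => exists_isChain_to_maximal hT.1.acyclic s
  refine ⟨f, fun s _ => ⟨⟨?_, (hchain s).imp hT.1.1, hnodup s⟩, hhead s, ?_⟩, ?_⟩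
  · exact List.ne_nil_of_mem (List.mem_of_mem_head? (hhead s))
  · obtain ⟨m, hm, hmax⟩ := hlast s
    exact ⟨m, hT.mem_X_of_forall_not hmax, hm⟩
  · intro s hs t ht hst v hvs hvt
    exact hst <| hS.eq_of_reflTransGen hT.1.1 hT.1.leftUnique hs ht (hreach s v hvs)
      (hreach t v hvt)
end

section
/- Let N = (V,A) be a rooted phylogenetic network on X, let O be its set of omnians, R its set of reticulations, and B_N the bipartite graph on (O,R) with an edge {o,r} whenever (o,r) is an arc of N. Then l(N) = |O| - m(B_N), where l(N) is the minimum, over all rooted spanning trees of N with the same root as N, of the number of leaves of the spanning tree not in X, and m(B_N) is the size of a maximum matching of B_N. -/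
open Relation

/-- `l(N)`: minimum, over rooted spanning trees of `N` with the same root,
of the number of leaves of the spanning tree outside `X`. -/
noncomputable def lN {V : Type*} [Fintype V] [DecidableEq V] (N : PhyloNet V) : ℕ :=
  sInf {n | ∃ T : V → V → Prop, IsRSTree N T ∧
    {v | outDeg T v = 0 ∧ v ∉ N.X}.ncard = n}

/-
Every arc into a non-reticulation lies in every rooted spanning tree, so a leaf of
a spanning tree outside `X` is an omnian. In a spanning tree `T`, each omnian that is not a leaf
of `T` keeps a child in `T`, a reticulation, and distinct vertices keep distinct children because
every vertex has a single parent in `T`: this is a matching of `B_N`, whence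
`|O| ≤ (leaves of T outside X) + m(B_N)`. Conversely, given a maximum matching, let every
matched reticulation take its partner as parent and every other non-root vertex any parent; in
the resulting spanning tree the only leaves outside `X` are unmatched omnians.
-/

lemma eq_of_inDeg_eq_one {V : Type*} {A : V → V → Prop} {u w v : V} (hv : inDeg A v = 1)
    (hu : A u v) (hw : A w v) : u = w := by
  obtain ⟨x, hx⟩ := Set.ncard_eq_one.mp hv
  have hu' : u ∈ ({x} : Set V) := hx ▸ hu
  have hw' : w ∈ ({x} : Set V) := hx ▸ hw
  rw [Set.mem_singleton_iff] at hu' hw'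
  rw [hu', hw']

section Degrees
variable {V : Type*} [Finite V]

lemma outDeg_eq_zero_iff {A : V → V → Prop} {u : V} : outDeg A u = 0 ↔ ∀ v, ¬ A u v := by
  rw [outDeg, Set.ncard_eq_zero (Set.toFinite _), Set.eq_empty_iff_forall_notMem]
  rfl

lemma one_lt_inDeg {A : V → V → Prop} {u w v : V} (hu : A u v) (hw : A w v) (hne : u ≠ w) :
    1 < inDeg A v :=
  (Set.one_lt_ncard_iff (Set.toFinite _)).mpr ⟨u, w, hu, hw, hne⟩

end Degrees

section Matching
variable {V : Type*} {E : V → V → Prop} {M : Finset (V × V)}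

lemma IsMatchingOn.injOn_fst (hM : IsMatchingOn E M) : Set.InjOn Prod.fst (M : Set (V × V)) :=
  fun e he f hf hef => hM.2 e he f hf (Or.inl hef)

lemma IsMatchingOn.card_image_fst [DecidableEq V] (hM : IsMatchingOn E M) :
    (M.image Prod.fst).card = M.card :=
  Finset.card_image_of_injOn hM.injOn_fst

lemma IsMatchingOn.eq_of_snd_eq (hM : IsMatchingOn E M) {o o' r : V} (h : (o, r) ∈ M)
    (h' : (o', r) ∈ M) : o = o' :=
  congrArg Prod.fst (hM.2 _ h _ h' (Or.inr rfl))

lemma bddAbove_matching_card [Fintype V] [DecidableEq V] (E : V → V → Prop) :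
    BddAbove {n | ∃ M : Finset (V × V), IsMatchingOn E M ∧ M.card = n} :=
  ⟨Fintype.card V, fun _ ⟨_, hM, hn⟩ => hn ▸ hM.card_image_fst ▸ Finset.card_le_univ _⟩

lemma IsMatchingOn.card_le_maxMatching [Fintype V] [DecidableEq V] (hM : IsMatchingOn E M) :
    M.card ≤ maxMatching E :=
  le_csSup (bddAbove_matching_card E) ⟨M, hM, rfl⟩

lemma exists_isMatchingOn_card_eq_maxMatching [Fintype V] [DecidableEq V] (E : V → V → Prop) :
    ∃ M : Finset (V × V), IsMatchingOn E M ∧ M.card = maxMatching E := by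
  refine Nat.sSup_mem ?_ (bddAbove_matching_card E)
  exact ⟨0, ∅, ⟨by simp, by simp⟩, rfl⟩

/-- The graph of a map that is injective on `S` and follows edges of `E` is a matching. -/
lemma card_le_maxMatching_of_injOn [Fintype V] [DecidableEq V] {S : Finset V} {c : V → V}
    (hE : ∀ o ∈ S, E o (c o)) (hc : Set.InjOn c S) : S.card ≤ maxMatching E := by
  have hgraph : IsMatchingOn E (S.image fun o => (o, c o)) := by
    refine ⟨?_, ?_⟩
    · simp only [Finset.mem_image]
      rintro _ ⟨o, ho, rfl⟩
      exact hE o ho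
    · simp only [Finset.mem_image]
      rintro _ ⟨o, ho, rfl⟩ _ ⟨o', ho', rfl⟩ (h | h)
      · rw [show o = o' from h]
      · rw [hc ho ho' h]
  calc S.card = (S.image fun o => (o, c o)).card :=
        (Finset.card_image_of_injective _ fun _ _ h => congrArg Prod.fst h).symm
    _ ≤ maxMatching E := hgraph.card_le_maxMatching

end Matching

namespace PhyloNet
variable {V : Type*} [Fintype V] [DecidableEq V] (N : PhyloNet V)

lemma not_arc_root (u : V) : ¬ N.Arc u N.root := fun h =>
  N.acyclic N.root (Relation.TransGen.tail' (N.reach u) h)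

lemma ne_root_of_arc {u v : V} (h : N.Arc u v) : v ≠ N.root :=
  fun hv => N.not_arc_root u (hv ▸ h)

lemma exists_arc_of_ne_root {v : V} (hv : v ≠ N.root) : ∃ u, N.Arc u v := by
  rcases (N.reach v).cases_tail with h | ⟨u, _, hu⟩
  · exact absurd h hv
  · exact ⟨u, hu⟩

lemma isRSTree_of_parent {par : V → V} (hpar : ∀ v, v ≠ N.root → N.Arc (par v) v) :
    IsRSTree N (fun u v => v ≠ N.root ∧ u = par v) := by
  have hparents :
      ∀ v, {u | v ≠ N.root ∧ u = par v} = if v = N.root then ∅ else {par v} := by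
    intro v
    split_ifs with h <;> ext u <;> simp [h]
  refine ⟨fun u v ⟨hv, hu⟩ => hu ▸ hpar v hv, fun v => ?_, fun v hv => ?_⟩
  · rw [inDeg, hparents v]
    split_ifs with h <;> simp [h]
  · rw [inDeg, hparents v, if_neg hv, Set.ncard_singleton]

end PhyloNet

namespace IsRSTree
variable {V : Type*} [Fintype V] [DecidableEq V] {N : PhyloNet V} {T : V → V → Prop}

lemma eq_of_arc (hT : IsRSTree N T) {u w v : V} (hu : T u v) (hw : T w v) : u = w :=
  eq_of_inDeg_eq_one (hT.2.2 v (N.ne_root_of_arc (hT.1 u v hu))) hu hw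

lemma arc_of_not_isRetic (hT : IsRSTree N T) {u v : V} (hA : N.Arc u v) (hv : ¬ IsRetic N v) :
    T u v := by
  obtain ⟨w, hw⟩ := Set.ncard_eq_one.mp (hT.2.2 v (N.ne_root_of_arc hA))
  have hwv : w ∈ {x | T x v} := hw ▸ Set.mem_singleton w
  by_contra huv
  have hne : u ≠ w := fun h => huv (h ▸ hwv)
  exact hv (one_lt_inDeg hA (hT.1 w v hwv) hne)

lemma isOmnian_of_outDeg_eq_zero (hT : IsRSTree N T) {v : V} (h0 : outDeg T v = 0)
    (hx : v ∉ N.X) : IsOmnian N v :=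
  ⟨hx, fun _ hA => by_contra fun hu => outDeg_eq_zero_iff.mp h0 _ (hT.arc_of_not_isRetic hA hu)⟩

lemma ncard_omnian_le (hT : IsRSTree N T) :
    {v | IsOmnian N v}.ncard ≤
      {v | outDeg T v = 0 ∧ v ∉ N.X}.ncard + maxMatching (BEdge N) := by
  classical
  set O := {v | IsOmnian N v}
  set L := {v | outDeg T v = 0 ∧ v ∉ N.X}
  have hLO : L ⊆ O := fun v hv => hT.isOmnian_of_outDeg_eq_zero hv.1 hv.2
  have hchild : ∀ o ∈ O \ L, ∃ r, T o r := fun o ho => by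
    by_contra! h
    exact ho.2 ⟨outDeg_eq_zero_iff.mpr h, ho.1.1⟩
  choose! c hc using hchild
  have hmatched : (O \ L).ncard ≤ maxMatching (BEdge N) := by
    rw [Set.ncard_eq_toFinset_card']
    refine card_le_maxMatching_of_injOn (c := c) (fun o ho => ?_) (fun o ho o' ho' h => ?_)
    · rw [Set.mem_toFinset] at ho
      have hA := hT.1 _ _ (hc o ho)
      exact ⟨ho.1, ho.1.2 _ hA, hA⟩
    · rw [Finset.mem_coe, Set.mem_toFinset] at ho ho'
      exact hT.eq_of_arc (hc o ho) (h ▸ hc o' ho')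
  rw [Set.ncard_sdiff hLO] at hmatched
  have := Set.ncard_le_ncard hLO
  omega

end IsRSTree

lemma exists_isRSTree_ncard_le {V : Type*} [Fintype V] [DecidableEq V] (N : PhyloNet V) :
    ∃ T, IsRSTree N T ∧
      {v | outDeg T v = 0 ∧ v ∉ N.X}.ncard ≤
        {v | IsOmnian N v}.ncard - maxMatching (BEdge N) := by
  obtain ⟨M, hM, hMcard⟩ := exists_isMatchingOn_card_eq_maxMatching (BEdge N)
  have hparent : ∀ v, v ≠ N.root → ∃ u, N.Arc u v ∧ ∀ o, (o, v) ∈ M → u = o := by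
    intro v hv
    by_cases hm : ∃ o, (o, v) ∈ M
    · obtain ⟨o, ho⟩ := hm
      exact ⟨o, (hM.1 _ ho).2.2, fun o' ho' => hM.eq_of_snd_eq ho ho'⟩
    · obtain ⟨u, hu⟩ := N.exists_arc_of_ne_root hv
      exact ⟨u, hu, fun o ho => absurd ⟨o, ho⟩ hm⟩
  choose! par hpar hpar_matched using hparent
  set T : V → V → Prop := fun u v => v ≠ N.root ∧ u = par v
  have hT : IsRSTree N T := N.isRSTree_of_parent hpar
  refine ⟨T, hT, ?_⟩
  have hmatched : (M.image Prod.fst : Set V) ⊆ {v | IsOmnian N v} := by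
    intro v hv
    rw [Finset.coe_image] at hv
    obtain ⟨e, he, rfl⟩ := hv
    exact (hM.1 e he).1
  have hleaves : {v | outDeg T v = 0 ∧ v ∉ N.X} ⊆ {v | IsOmnian N v} \ M.image Prod.fst := by
    rintro v ⟨h0, hx⟩
    refine ⟨hT.isOmnian_of_outDeg_eq_zero h0 hx, ?_⟩
    intro hv
    rw [Finset.coe_image] at hv
    obtain ⟨⟨o, r⟩, he, rfl⟩ := hv
    have hr := N.ne_root_of_arc (hM.1 _ he).2.2
    exact outDeg_eq_zero_iff.mp h0 r ⟨hr, (hpar_matched r hr o he).symm⟩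
  calc _ ≤ ({v | IsOmnian N v} \ M.image Prod.fst).ncard := Set.ncard_le_ncard hleaves
    _ = _ := by
      rw [Set.ncard_sdiff hmatched, Set.ncard_coe_finset, hM.card_image_fst, hMcard]

lemma lN_le_ncard {V : Type*} [Fintype V] [DecidableEq V] {N : PhyloNet V} {T : V → V → Prop}
    (hT : IsRSTree N T) : lN N ≤ {v | outDeg T v = 0 ∧ v ∉ N.X}.ncard :=
  Nat.sInf_le ⟨T, hT, rfl⟩

lemma exists_isRSTree_ncard_eq_lN {V : Type*} [Fintype V] [DecidableEq V] (N : PhyloNet V) :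
    ∃ T, IsRSTree N T ∧ {v | outDeg T v = 0 ∧ v ∉ N.X}.ncard = lN N := by
  refine Nat.sInf_mem
    (s := {n | ∃ T, IsRSTree N T ∧ {v | outDeg T v = 0 ∧ v ∉ N.X}.ncard = n}) ?_
  choose! par hpar using fun v (hv : v ≠ N.root) => N.exists_arc_of_ne_root hv
  exact ⟨_, _, N.isRSTree_of_parent hpar, rfl⟩

/-- `l(N) = |O| - m(B_N)`. -/
theorem stmt12 {V : Type*} [Fintype V] [DecidableEq V] (N : PhyloNet V) :
    lN N = {v | IsOmnian N v}.ncard - maxMatching (BEdge N) := by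
  obtain ⟨T₀, hT₀, hupper⟩ := exists_isRSTree_ncard_le N
  obtain ⟨T, hT, hmin⟩ := exists_isRSTree_ncard_eq_lN N
  have hlower := hT.ncard_omnian_le
  have hle := lN_le_ncard hT₀
  omega
end
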